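/- arXiv:math/0506580 — 2 statements merged into one kernel-verified Lean document; each statement's English description precedes it below -/
import Mathlib

section
/- Let f : ℝ → ℂ be continuous with f(t) ≠ 0 for all t and f(t + 1/2) = −f(t) for all t. Then (i) for any continuous function θ : ℝ → ℝ satisfying f(t) = ‖f(t)‖·exp(i·θ(t)) for all t, the function t ↦ θ(t + 1/2) − θ(t) is constant and equal to π + 2πk for some integer k, and (ii) consequently θ(1) − θ(0) = 2π·m for some odd integer m; i.e., a loop in ℂ \ {0} that is antipodally odd (γ(t+1/2) = −γ(t)) has odd winding number around the origin. -/
open Real Complex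

/-- A loop in `ℂ \ {0}` that is antipodally odd (`f (t + 1/2) = -f t`) has odd winding
number around the origin: for any continuous argument lift `θ`,
(i) `t ↦ θ (t + 1/2) - θ t` is constantly `π + 2πk` for some integer `k`, and
(ii) `θ 1 - θ 0 = 2πm` for some odd integer `m`. -/
theorem odd_loop_has_odd_winding
    (f : ℝ → ℂ) (hf : Continuous f) (hne : ∀ t, f t ≠ 0)
    (hanti : ∀ t, f (t + 1 / 2) = -f t)
    (θ : ℝ → ℝ) (hθ : Continuous θ)
    (hlift : ∀ t, f t = (‖f t‖ : ℂ) * Complex.exp (Complex.I * (θ t : ℂ))) :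
    (∃ k : ℤ, ∀ t, θ (t + 1 / 2) - θ t = π + 2 * π * k) ∧
    (∃ m : ℤ, Odd m ∧ θ 1 - θ 0 = 2 * π * m) := by
  -- the pointwise claim: g t := θ(t+1/2) - θ t lies in π + 2πℤ
  have key : ∀ t, ∃ n : ℤ, θ (t + 1 / 2) - θ t = π + 2 * π * n := by
    intro t
    have h1 := hlift t
    have h2 := hlift (t + 1 / 2)
    have hnorm : ‖f (t + 1 / 2)‖ = ‖f t‖ := by rw [hanti t, norm_neg]
    have hcast : (‖f t‖ : ℂ) = (‖f (t + 1 / 2)‖ : ℂ) := by rw [hnorm]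
    have hne' : (‖f t‖ : ℂ) ≠ 0 := by
      simpa using (norm_ne_zero_iff.mpr (hne t))
    have heq : Complex.exp (Complex.I * (θ (t + 1 / 2) : ℂ))
        = Complex.exp (Complex.I * (θ t : ℂ) + π * Complex.I) := by
      have hmul : (‖f t‖ : ℂ) * Complex.exp (Complex.I * (θ (t + 1 / 2) : ℂ))
          = (‖f t‖ : ℂ) * (-Complex.exp (Complex.I * (θ t : ℂ))) := by
        have hthis := hanti t
        rw [h2, h1] at hthis
        linear_combination hthis + Complex.exp (Complex.I * (θ (t + 1 / 2) : ℂ)) * hcast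
      have h3 := mul_left_cancel₀ hne' hmul
      rw [h3, Complex.exp_add, Complex.exp_pi_mul_I]; ring
    rw [Complex.exp_eq_exp_iff_exists_int] at heq
    obtain ⟨n, hn⟩ := heq
    refine ⟨n, ?_⟩
    have := congrArg Complex.im hn
    simp [Complex.add_im, Complex.mul_im, Complex.mul_re] at this
    linarith
  -- the integer-valued continuous function h is constant
  set g : ℝ → ℝ := fun t => θ (t + 1 / 2) - θ t with hg
  have hgc : Continuous g := (hθ.comp (continuous_id.add continuous_const)).sub hθ
  set h : ℝ → ℝ := fun t => (g t - π) / (2 * π) with hh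
  have hhc : Continuous h := (hgc.sub continuous_const).div_const _
  have hpi : (2 * π) ≠ 0 := by positivity
  have hint : ∀ t, ∃ n : ℤ, h t = n := by
    intro t
    obtain ⟨n, hn⟩ := key t
    refine ⟨n, ?_⟩
    simp only [hh, hg]
    rw [hn]
    field_simp
    ring
  have hconst : ∀ t, h t = h 0 := by
    intro t
    by_contra hne0
    obtain ⟨n0, hn0⟩ := hint 0
    obtain ⟨nt, hnt⟩ := hint t
    have hnn : n0 ≠ nt := by
      intro hc; apply hne0; rw [hnt, hn0, hc]
    set a : ℤ := min n0 nt with ha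
    set b : ℤ := max n0 nt with hb
    have hab : (a : ℝ) + 1 ≤ (b : ℝ) := by
      exact_mod_cast (by omega : a + 1 ≤ b)
    have hsub : Set.uIcc (h 0) (h t) ⊆ h '' Set.uIcc 0 t :=
      intermediate_value_uIcc hhc.continuousOn
    have hc : (a : ℝ) + 1 / 2 ∈ Set.uIcc (h 0) (h t) := by
      rw [Set.uIcc, Set.mem_Icc, hn0, hnt]
      have hmin : ((n0 : ℝ) ⊓ (nt : ℝ)) = (a : ℝ) := by
        rw [ha]; push_cast; rfl
      have hmax : ((n0 : ℝ) ⊔ (nt : ℝ)) = (b : ℝ) := by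
        rw [hb]; push_cast; rfl
      rw [hmin, hmax]
      constructor <;> linarith
    obtain ⟨s, _, hs⟩ := hsub hc
    obtain ⟨m, hm⟩ := hint s
    rw [hm] at hs
    have h2m : ((2 * m : ℤ) : ℝ) = ((2 * a + 1 : ℤ) : ℝ) := by push_cast; linarith
    have : (2 * m : ℤ) = 2 * a + 1 := by exact_mod_cast h2m
    omega
  obtain ⟨k, hk⟩ := hint 0
  have hgt : ∀ t, g t = π + 2 * π * k := by
    intro t
    have h1 := hconst t
    rw [hk] at h1
    have h2 : (g t - π) / (2 * π) = k := h1
    have h3 : g t - π = 2 * π * k := by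
      field_simp at h2; linarith
    linarith
  constructor
  · exact ⟨k, fun t => hgt t⟩
  · refine ⟨2 * k + 1, ⟨k, by ring⟩, ?_⟩
    have e1 := hgt 0
    have e2 := hgt (1 / 2)
    simp only [hg] at e1 e2
    norm_num at e1 e2
    push_cast
    linarith
end

section
/- Let D̄ = {z ∈ ℂ : ‖z‖ ≤ 1} and Circle = {z ∈ ℂ : ‖z‖ = 1}, and let φ : D̄ × Circle → ℂ be continuous and odd in the fiber variable: φ(p, −w) = −φ(p, w) for all p ∈ D̄, w ∈ Circle. Suppose the boundary loop β : t ↦ φ(exp(2πit), −exp(2πit)) never takes the value 0 and is null-homotopic in ℂ \ {0}. Then φ vanishes at some point: there exist p ∈ D̄ and w ∈ Circle with φ(p, w) = 0. -/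
/-!
If `φ` had no zero, `(s, t) ↦ φ (s e(t), -e(t))` with `e(t) = exp (2πit)` would be a free homotopy
of loops in `ℂ \ {0}` from `t ↦ φ (0, -e(t))` to the boundary loop. Along a loop, the change of a
continuous logarithm (a lift through the covering `exp : ℂ → ℂ \ {0}`) is invariant under free
homotopy. It vanishes for the null-homotopic boundary loop, but not for the loop at the centre:
oddness of `φ` makes that loop antiperiodic with antiperiod `1/2`, so its logarithm gains the same
odd multiple of `πi` on each half.
-/

open Real Complex Set

noncomputable instance : Neg Circle :=
  ⟨fun z => ⟨-(z : ℂ), by simp [Submonoid.unitSphere, mem_sphere_zero_iff_norm, Circle.norm_coe]⟩⟩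

-- `Circle.coe_neg` is stated for Mathlib's instance, which the one above shadows.
@[simp]
theorem Circle.coe_neg_eq_neg_coe (w : Circle) : ((-w : Circle) : ℂ) = -(w : ℂ) := rfl

theorem IsPreconnected.eq_of_exp_eq_one {α : Type*} [TopologicalSpace α] {S : Set α}
    (hS : IsPreconnected S) {f : α → ℂ} (hf : ContinuousOn f S) (h : ∀ x ∈ S, exp (f x) = 1)
    {x y : α} (hx : x ∈ S) (hy : y ∈ S) : f x = f y := by
  refine hS.constant_of_mapsTo (T := (AddSubgroup.zmultiples (2 * π * I) : Set ℂ))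
    (SetLike.isDiscrete_iff_discreteTopology.2 inferInstance) hf (fun z hz => ?_) hx hy
  obtain ⟨n, hn⟩ := exp_eq_one_iff.1 (h z hz)
  exact AddSubgroup.mem_zmultiples_iff.2 ⟨n, by simp [hn]⟩

theorem sub_eq_sub_of_exp_eq_exp {α : Type*} [TopologicalSpace α] [PreconnectedSpace α]
    {f g : α → ℂ} (hf : Continuous f) (hg : Continuous g) (h : ∀ a, exp (f a) = exp (g a))
    (a b : α) : f b - f a = g b - g a := by
  have := isPreconnected_univ.eq_of_exp_eq_one (hf.sub hg).continuousOn
    (fun c _ => by rw [Pi.sub_apply, Complex.exp_sub, h, div_self (Complex.exp_ne_zero _)])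
    (mem_univ a) (mem_univ b)
  simp only [Pi.sub_apply] at this
  linear_combination -this

theorem exists_exp_lift (γ : C(unitInterval, {z : ℂ // z ≠ 0})) :
    ∃ Γ : C(unitInterval, ℂ), ∀ t, exp (Γ t) = γ t := by
  obtain ⟨Γ, hΓ, -⟩ := isCoveringMap_exp.exists_path_lifts γ (log (γ 0))
    (Subtype.ext (exp_log (γ 0).2).symm)
  exact ⟨Γ, fun t => congrArg Subtype.val (congrFun hΓ t)⟩

theorem lift_sub_eq_of_loop_homotopy (F : C(unitInterval × unitInterval, {z : ℂ // z ≠ 0}))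
    (hF : ∀ s, F (s, 0) = F (s, 1)) {Γ₀ Γ₁ : C(unitInterval, ℂ)}
    (h₀ : ∀ t, exp (Γ₀ t) = F (0, t)) (h₁ : ∀ t, exp (Γ₁ t) = F (1, t)) :
    Γ₀ 1 - Γ₀ 0 = Γ₁ 1 - Γ₁ 0 := by
  let G := isCoveringMap_exp.liftHomotopy F Γ₀ fun t => Subtype.ext (h₀ t).symm
  have hG : ∀ st, exp (G st) = F st := fun st =>
    congrArg Subtype.val (congrFun (isCoveringMap_exp.liftHomotopy_lifts ..) st)
  have hG₀ : ∀ t, G (0, t) = Γ₀ t := fun t => isCoveringMap_exp.liftHomotopy_zero ..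
  have hends : G (0, 1) - G (0, 0) = G (1, 1) - G (1, 0) := by
    have hcont (t : unitInterval) : Continuous fun s => G (s, t) := by fun_prop
    have := sub_eq_sub_of_exp_eq_exp (hcont 1) (hcont 0) (fun s => by rw [hG, hG, hF]) 0 1
    linear_combination -this
  have hG₁ := sub_eq_sub_of_exp_eq_exp (f := fun t => G (1, t)) (by fun_prop) Γ₁.continuous
    (fun t => by rw [hG, h₁]) 0 1
  rw [← hG₀, ← hG₀, hends, hG₁]

theorem ne_of_exp_add_half_eq_neg {f : ℝ → ℂ} (hf : ContinuousOn f (Icc 0 1))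
    (hanti : ∀ t ∈ Icc (0 : ℝ) (1 / 2), exp (f (t + 1 / 2)) = -exp (f t)) : f 1 ≠ f 0 := by
  intro h10
  -- `g t` is a logarithm of `1`, hence constant; `f 1 = f 0` would force `g 0 = -πi`.
  have hshift : MapsTo (· + 1 / 2) (Icc (0 : ℝ) (1 / 2)) (Icc 0 1) :=
    fun t ht => ⟨by linarith [ht.1], by linarith [ht.2]⟩
  have hhalf : Icc (0 : ℝ) (1 / 2) ⊆ Icc 0 1 := Icc_subset_Icc_right (by norm_num)
  let g t := f (t + 1 / 2) - f t - π * I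
  have hg : ContinuousOn g (Icc 0 (1 / 2)) :=
    ((hf.comp (by fun_prop) hshift).sub (hf.mono hhalf)).sub continuousOn_const
  have hexp : ∀ t ∈ Icc (0 : ℝ) (1 / 2), exp (g t) = 1 := fun t ht => by
    rw [Complex.exp_sub, Complex.exp_sub, hanti t ht, exp_pi_mul_I,
      neg_div, div_self (Complex.exp_ne_zero _)]
    norm_num
  have hg0 : g 0 = g (1 / 2) := isPreconnected_Icc.eq_of_exp_eq_one hg hexp
    (left_mem_Icc.2 (by norm_num)) (right_mem_Icc.2 (by norm_num))
  have hg0' : g 0 = -(π * I) := by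
    simp only [g] at hg0 ⊢
    norm_num at hg0 ⊢
    linear_combination (hg0 + h10) / 2
  have := hexp 0 (left_mem_Icc.2 (by norm_num))
  rw [hg0', Complex.exp_neg, exp_pi_mul_I] at this
  norm_num at this

theorem lift_one_ne_lift_zero_of_antiperiodic {γ : ℝ → ℂ} (hγ : Function.Antiperiodic γ (1 / 2))
    {Γ : C(unitInterval, ℂ)} (hΓ : ∀ t : unitInterval, exp (Γ t) = γ t) : Γ 1 ≠ Γ 0 := by
  have hf := ne_of_exp_add_half_eq_neg (f := IccExtend zero_le_one Γ)
    (Γ.continuous.Icc_extend' (h := zero_le_one)).continuousOn fun t ht => by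
      have ht' : t + 1 / 2 ∈ Icc (0 : ℝ) 1 := ⟨by linarith [ht.1], by linarith [ht.2]⟩
      rw [IccExtend_of_mem _ _ ht', IccExtend_of_mem _ _ (Icc_subset_Icc_right (by norm_num) ht),
        hΓ, hΓ, ← hγ]
  simpa using hf

def radialPoint (s : unitInterval) (w : Circle) : Metric.closedBall (0 : ℂ) 1 :=
  ⟨s * w, by simpa [abs_of_nonneg s.2.1, Circle.norm_coe] using s.2.2⟩

theorem continuous_radialPoint :
    Continuous fun sw : unitInterval × Circle => radialPoint sw.1 sw.2 := by
  unfold radialPoint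
  fun_prop

theorem continuous_circle_neg : Continuous fun w : Circle => -w :=
  Continuous.subtype_mk (by fun_prop) _

theorem Circle.exp_add_pi (t : ℝ) : Circle.exp (t + π) = -Circle.exp t :=
  Subtype.ext <| by simp [Circle.coe_exp]

noncomputable def fiberLoop (φ : Metric.closedBall (0 : ℂ) 1 × Circle → ℂ) (s : unitInterval)
    (t : ℝ) : ℂ :=
  φ (radialPoint s (Circle.exp (2 * π * t)), -Circle.exp (2 * π * t))

section fiberLoop

variable {φ : Metric.closedBall (0 : ℂ) 1 × Circle → ℂ}

theorem Continuous.fiberLoop (hφ : Continuous φ) :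
    Continuous fun st : unitInterval × ℝ => fiberLoop φ st.1 st.2 := by
  have := continuous_radialPoint
  have := continuous_circle_neg
  unfold _root_.fiberLoop
  fun_prop

theorem fiberLoop_zero_eq_one (s : unitInterval) : fiberLoop φ s 0 = fiberLoop φ s 1 := by
  simp [fiberLoop]

theorem fiberLoop_zero_antiperiodic (hodd : ∀ p w, φ (p, -w) = -φ (p, w)) :
    Function.Antiperiodic (fiberLoop φ 0) (1 / 2) := fun t => by
  have hcenter : ∀ w w', radialPoint 0 w = radialPoint 0 w' :=
    fun _ _ => Subtype.ext (by simp [radialPoint])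
  have hhalf : Circle.exp (2 * π * (t + 1 / 2)) = -Circle.exp (2 * π * t) := by
    rw [← Circle.exp_add_pi]; ring_nf
  rw [fiberLoop, fiberLoop, hhalf, hcenter _ (Circle.exp (2 * π * t))]
  exact hodd _ _

end fiberLoop

/-- Let `φ : D̄ × Circle → ℂ` be continuous and odd in the fiber variable.
If the boundary loop `t ↦ φ (exp (2πit), -exp (2πit))` avoids `0` and is
null-homotopic in `ℂ \ {0}`, then `φ` vanishes somewhere. -/
theorem exists_zero_of_boundary_loop_nullhomotopic
    (φ : (Metric.closedBall (0 : ℂ) 1) × Circle → ℂ) (hφ : Continuous φ)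
    (hodd : ∀ (p : Metric.closedBall (0 : ℂ) 1) (w : Circle), φ (p, -w) = -φ (p, w))
    (x : {z : ℂ // z ≠ 0}) (b : Path x x)
    (hb : ∀ (t : unitInterval) (v : (Metric.closedBall (0 : ℂ) 1) × Circle),
      (v.1 : ℂ) = Complex.exp (2 * π * (t : ℝ) * Complex.I) →
      (v.2 : ℂ) = -Complex.exp (2 * π * (t : ℝ) * Complex.I) →
      (b t : ℂ) = φ v)
    (hnull : b.Homotopic (Path.refl x)) :
    ∃ (p : Metric.closedBall (0 : ℂ) 1) (w : Circle), φ (p, w) = 0 := by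
  by_contra! hne
  let F : C(unitInterval × unitInterval, {z : ℂ // z ≠ 0}) :=
    ⟨fun st => ⟨fiberLoop φ st.1 st.2, hne _ _⟩, (hφ.fiberLoop.comp
      (continuous_fst.prodMk (continuous_subtype_val.comp continuous_snd))).subtype_mk _⟩
  have hFb : ∀ t, F (1, t) = b t := fun t => Subtype.ext <| (hb t _
    (by simp [radialPoint, Circle.coe_exp]) (by simp [Circle.coe_exp])).symm
  obtain ⟨Γ₀, hΓ₀⟩ := exists_exp_lift (F.curry 0)
  obtain ⟨Γ₁, hΓ₁⟩ := exists_exp_lift b.toContinuousMap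
  obtain ⟨H⟩ := hnull
  have hcenter := lift_sub_eq_of_loop_homotopy F (fun s => Subtype.ext (fiberLoop_zero_eq_one s))
    hΓ₀ fun t => by rw [hFb]; exact hΓ₁ t
  have hboundary : Γ₁ 1 - Γ₁ 0 = 0 := by
    simpa using lift_sub_eq_of_loop_homotopy H.toContinuousMap (fun s => by simp)
      (Γ₁ := .const _ (log x)) (fun t => by rw [hΓ₁]; simp) fun t => by simp [exp_log x.2]
  exact lift_one_ne_lift_zero_of_antiperiodic (fiberLoop_zero_antiperiodic hodd) hΓ₀
    (by linear_combination hcenter + hboundary)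
end
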